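/- Let d ∈ ℕ and C > 0. Let 𝒰_d be the set of all subsets of [d] = {1, …, d}, and for weights γ : 𝒰_d → [0,∞) define (T↑ γ)_u := Σ_{v ∈ 𝒰_d, u ⊆ v} C^{2|v|} γ_v and (T↓ γ)_u := C^{−2|u|} (Δ_{[d] ∖ u} γ)_u. Then T↑ maps the set of all weights on 𝒰_d bijectively onto the set of completely monotone weights on 𝒰_d, and its inverse is T↓; that is: T↑ γ is completely monotone for every weight γ, T↓(T↑ γ) = γ for every weight γ, and T↑(T↓ γ) = γ for every completely monotone weight γ. -/

import Mathlib

/-!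
Write `β_v = C^{2|v|} γ_v`, so that `T↑ γ` is the upper sum `u ↦ Σ_{s ⊇ u} β_s`. Exchanging the
two sums in `Δ_v` and summing the alternating signs over `w ⊆ v ∩ s` shows that `Δ_v` of an upper
sum at `u` is the sum of `β_s` over the `s ⊇ u` disjoint from `v`. This is nonnegative, and for
`v = [d] ∖ u` only `s = u` survives, so `T↓ ∘ T↑ = id`. Both maps are linear on the
finite-dimensional space of families, so this left inverse is also a right inverse.
-/

open Finset

noncomputable def Δ {α : Type*} [DecidableEq α] (v : Finset α) (γ : Finset α → ℝ)
    (u : Finset α) : ℝ :=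
  ∑ w ∈ v.powerset, (-1 : ℝ) ^ w.card * γ (u ∪ w)

lemma sum_powerset_neg_one_pow_card_real {α : Type*} [DecidableEq α] (x : Finset α) :
    ∑ w ∈ x.powerset, (-1 : ℝ) ^ #w = if x = ∅ then 1 else 0 := by
  exact_mod_cast sum_powerset_neg_one_pow_card (x := x)

section UpperSum

variable {α : Type*} [Fintype α] [DecidableEq α]

def upperSum (β : Finset α → ℝ) (u : Finset α) : ℝ :=
  ∑ s, if u ⊆ s then β s else 0

noncomputable def complDelta (γ : Finset α → ℝ) (u : Finset α) : ℝ :=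
  Δ (univ \ u) γ u

lemma Δ_upperSum (β : Finset α → ℝ) (v u : Finset α) :
    Δ v (upperSum β) u = ∑ s, if u ⊆ s ∧ Disjoint v s then β s else 0 := by
  simp only [Δ, upperSum, mul_sum, mul_ite, mul_zero]
  rw [sum_comm]
  refine sum_congr rfl fun s _ => ?_
  by_cases hu : u ⊆ s
  · have hsub : ∀ w, u ∪ w ⊆ s ↔ w ⊆ s := fun w => by simp [union_subset_iff, hu]
    have hfilter : {w ∈ v.powerset | w ⊆ s} = (v ∩ s).powerset := by
      ext w; simp only [mem_filter, mem_powerset, subset_inter_iff]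
    simp only [hsub, hu, true_and]
    rw [← sum_filter, hfilter, ← sum_mul, sum_powerset_neg_one_pow_card_real]
    simp [← disjoint_iff_inter_eq_empty]
  · simp [union_subset_iff, hu]

lemma Δ_upperSum_nonneg {β : Finset α → ℝ} (hβ : ∀ s, 0 ≤ β s) (v u : Finset α) :
    0 ≤ Δ v (upperSum β) u := by
  rw [Δ_upperSum]
  exact sum_nonneg fun s _ => by split_ifs <;> simp [hβ]

lemma complDelta_upperSum (β : Finset α → ℝ) : complDelta (upperSum β) = β := by
  funext u
  have hsingle : ∀ s, u ⊆ s ∧ Disjoint (univ \ u) s ↔ s = u := fun s => by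
    rw [disjoint_comm, disjoint_sdiff_iff_le (subset_univ s) (subset_univ u)]
    exact ⟨fun h => le_antisymm h.2 h.1, fun h => h ▸ ⟨le_rfl, le_rfl⟩⟩
  simp only [complDelta, Δ_upperSum, hsingle, sum_ite_eq', mem_univ, if_true]

def upperSumₗ : (Finset α → ℝ) →ₗ[ℝ] (Finset α → ℝ) where
  toFun := upperSum
  map_add' β β' := by ext u; simp [upperSum, ← sum_add_distrib, ite_add_ite]
  map_smul' c β := by ext u; simp [upperSum, mul_sum]

noncomputable def complDeltaₗ : (Finset α → ℝ) →ₗ[ℝ] (Finset α → ℝ) where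
  toFun := complDelta
  map_add' γ γ' := by ext u; simp [complDelta, Δ, ← sum_add_distrib, mul_add]
  map_smul' c γ := by ext u; simp [complDelta, Δ, mul_sum, mul_left_comm]

lemma upperSum_complDelta (γ : Finset α → ℝ) : upperSum (complDelta γ) = γ := by
  have h : complDeltaₗ ∘ₗ upperSumₗ = (LinearMap.id : Module.End ℝ (Finset α → ℝ)) :=
    LinearMap.ext complDelta_upperSum
  exact congrArg (· γ) ((LinearMap.comp_eq_id_comm _ _).mp h)

end UpperSum

theorem stmt7 (d : ℕ) (C : ℝ) (hC : 0 < C)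
    (Tup Td : (Finset (Fin d) → ℝ) → Finset (Fin d) → ℝ)
    (hTup : ∀ γ u, Tup γ u = ∑ v : Finset (Fin d),
      if u ⊆ v then C ^ (2 * v.card) * γ v else 0)
    (hTd : ∀ γ u, Td γ u = (C ^ (2 * u.card))⁻¹ * Δ (Finset.univ \ u) γ u) :
    (∀ γ : Finset (Fin d) → ℝ, (∀ u, 0 ≤ γ u) → ∀ v u, 0 ≤ Δ v (Tup γ) u) ∧
    (∀ γ : Finset (Fin d) → ℝ, (∀ u, 0 ≤ γ u) → Td (Tup γ) = γ) ∧
    (∀ γ : Finset (Fin d) → ℝ, (∀ v u, 0 ≤ Δ v γ u) →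
      (∀ u, 0 ≤ Td γ u) ∧ Tup (Td γ) = γ) := by
  have hTup' : ∀ γ, Tup γ = upperSum fun v => C ^ (2 * #v) * γ v := fun γ => funext (hTup γ)
  have hTd' : ∀ γ, Td γ = fun u => (C ^ (2 * #u))⁻¹ * complDelta γ u := fun γ => funext (hTd γ)
  have hpow : ∀ u : Finset (Fin d), C ^ (2 * #u) ≠ 0 := fun u => pow_ne_zero _ hC.ne'
  refine ⟨fun γ hγ v u => ?_, fun γ _ => ?_, fun γ hγ => ⟨fun u => ?_, ?_⟩⟩
  · rw [hTup']
    exact Δ_upperSum_nonneg (fun s => mul_nonneg (by positivity) (hγ s)) v u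
  · rw [hTd', hTup', complDelta_upperSum]
    simp [inv_mul_cancel_left₀ (hpow _)]
  · rw [hTd']
    exact mul_nonneg (by positivity) (hγ _ _)
  · rw [hTup', hTd']
    simp only [mul_inv_cancel_left₀ (hpow _)]
    exact upperSum_complDelta γ
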